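/- Let T ∈ ℂ^{N_T×N_T} be Hermitian positive semidefinite, let λ > 0, let I ⊆ (0,∞) be an open interval, and let δ : I → ℝ be a differentiable function with δ(s) ≥ 0 for all s ∈ I such that δ(s) = (1/s)·tr(T·(I_{N_T} + (λ/(1+λδ(s)))·T)^{-1}) holds for every s ∈ I. Define g : I → ℝ by g(s) = log det(I_{N_T} + (λ/(1+λδ(s)))·T) + s·log(1+λδ(s)) − s·λδ(s)/(1+λδ(s)). Then g is differentiable on I with g'(s) = log(1+λδ(s)) − λδ(s)/(1+λδ(s)) ≥ 0 for all s ∈ I; in particular g is monotonically nondecreasing on I. -/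

import Mathlib

/-!
Diagonalising `T` with eigenvalues `μᵢ ≥ 0`, `c ↦ log det (1 + c T) = ∑ log (1 + c μᵢ)` has
derivative `∑ μᵢ / (1 + c μᵢ) = tr (T (1 + c T)⁻¹)`, which by the fixed-point equation equals
`s δ(s)` at `c = λ / (1 + λ δ(s))`. With this value every term containing `δ'(s)` cancels in the
chain rule (`g` is stationary in `δ`), so `g'(s) = log (1 + λδ) - λδ / (1 + λδ)`, which is
nonnegative since `log y ≥ 1 - 1 / y`.
-/

open Matrix Real
open scoped ComplexOrder

lemma hasDerivAt_log_prod_one_add_mul {ι : Type*} [Fintype ι] (μ : ι → ℝ) {x : ℝ}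
    (hx : ∀ i, 1 + x * μ i ≠ 0) :
    HasDerivAt (fun y => log (∏ i, (1 + y * μ i))) (∑ i, μ i / (1 + x * μ i)) x := by
  have hsum : HasDerivAt (fun y => ∑ i, log (1 + y * μ i)) (∑ i, μ i / (1 + x * μ i)) x := by
    refine HasDerivAt.fun_sum fun i _ => ?_
    simpa using (((hasDerivAt_id x).mul_const (μ i)).const_add 1).log (hx i)
  have hne : ∀ᶠ y in nhds x, ∀ i, 1 + y * μ i ≠ 0 :=
    Filter.eventually_all.2 fun i =>
      (((continuous_id.mul continuous_const).const_add 1).continuousAt).eventually_ne (hx i)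
  exact hsum.congr_of_eventuallyEq <| hne.mono fun y hy => log_prod fun i _ => hy i

namespace Matrix.IsHermitian
variable {n 𝕜 : Type*} [RCLike 𝕜] [Fintype n] [DecidableEq n] {A : Matrix n n 𝕜}

lemma det_cfc (hA : A.IsHermitian) (f : ℝ → ℝ) :
    (cfc f A).det = ∏ i, (f (hA.eigenvalues i) : 𝕜) := by
  simp [hA.cfc_eq, IsHermitian.cfc, -Unitary.conjStarAlgAut_apply]

lemma trace_cfc (hA : A.IsHermitian) (f : ℝ → ℝ) :
    (cfc f A).trace = ∑ i, (f (hA.eigenvalues i) : 𝕜) := by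
  rw [hA.cfc_eq, IsHermitian.cfc, Unitary.conjStarAlgAut_apply, trace_mul_cycle,
    Unitary.coe_star_mul_self, one_mul, trace_diagonal]
  rfl

lemma one_add_smul_eq_cfc (hA : A.IsHermitian) (x : ℝ) :
    1 + x • A = cfc (fun t => 1 + x * t) A := by
  rw [cfc_const_add _ _ _ (A.finite_real_spectrum.continuousOn _) hA.isSelfAdjoint,
    cfc_const_mul_id _ _ hA.isSelfAdjoint, map_one]

lemma mul_inv_one_add_smul_eq_cfc (hA : A.IsHermitian) (x : ℝ)
    (hx : ∀ i, 1 + x * hA.eigenvalues i ≠ 0) :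
    A * (1 + x • A)⁻¹ = cfc (fun t => t / (1 + x * t)) A := by
  have hc : ∀ f : ℝ → ℝ, ContinuousOn f (spectrum ℝ A) := fun f =>
    A.finite_real_spectrum.continuousOn f
  have hinv : (1 + x • A)⁻¹ = cfc (fun t => (1 + x * t)⁻¹) A := by
    refine inv_eq_right_inv ?_
    rw [one_add_smul_eq_cfc hA, ← cfc_mul _ _ _ (hc _) (hc _)]
    refine (cfc_congr fun t ht => ?_).trans (cfc_const_one ℝ A)
    rw [hA.spectrum_real_eq_range_eigenvalues] at ht
    obtain ⟨i, rfl⟩ := ht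
    exact mul_inv_cancel₀ (hx i)
  calc A * (1 + x • A)⁻¹ = cfc id A * cfc (fun t => (1 + x * t)⁻¹) A := by
        rw [hinv, cfc_id ℝ A hA.isSelfAdjoint]
    _ = cfc (fun t => t / (1 + x * t)) A := by
        simp only [← cfc_mul _ _ _ (hc _) (hc _), id, div_eq_mul_inv]

lemma det_one_add_smul (hA : A.IsHermitian) (x : ℝ) :
    (1 + x • A).det = ∏ i, ((1 + x * hA.eigenvalues i : ℝ) : 𝕜) := by
  rw [one_add_smul_eq_cfc hA, det_cfc hA]

lemma trace_mul_inv_one_add_smul (hA : A.IsHermitian) (x : ℝ)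
    (hx : ∀ i, 1 + x * hA.eigenvalues i ≠ 0) :
    (A * (1 + x • A)⁻¹).trace =
      ∑ i, ((hA.eigenvalues i / (1 + x * hA.eigenvalues i) : ℝ) : 𝕜) := by
  rw [mul_inv_one_add_smul_eq_cfc hA x hx, trace_cfc hA]

lemma hasDerivAt_log_re_det_one_add_smul {T : Matrix n n ℂ} (hT : T.IsHermitian) {x : ℝ}
    (hx : ∀ i, 1 + x * hT.eigenvalues i ≠ 0) :
    HasDerivAt (fun c : ℝ => Real.log ((1 + (c : ℂ) • T).det.re))
      (T * (1 + (x : ℂ) • T)⁻¹).trace.re x := by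
  have hdet : (fun c : ℝ => Real.log ((1 + (c : ℂ) • T).det.re)) =
      fun c => Real.log (∏ i, (1 + c * hT.eigenvalues i)) := by
    funext c
    rw [Complex.coe_smul, hT.det_one_add_smul, ← RCLike.ofReal_prod]
    exact congrArg Real.log (Complex.ofReal_re _)
  rw [hdet, Complex.coe_smul, hT.trace_mul_inv_one_add_smul x hx, ← RCLike.ofReal_sum]
  exact hasDerivAt_log_prod_one_add_mul _ hx

end Matrix.IsHermitian

/-- `hL` is the fixed-point equation for `δ`, read as `L'(λ / (1 + λδ(s))) = s δ(s)`. -/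
lemma hasDerivAt_rhoBar {L δ : ℝ → ℝ} {lam s d : ℝ} (hδ : HasDerivAt δ d s)
    (hden : 1 + lam * δ s ≠ 0) (hL : HasDerivAt L (s * δ s) (lam / (1 + lam * δ s))) :
    HasDerivAt
      (fun u => L (lam / (1 + lam * δ u)) + u * log (1 + lam * δ u)
        - u * (lam * δ u / (1 + lam * δ u)))
      (log (1 + lam * δ s) - lam * δ s / (1 + lam * δ s)) s := by
  have hD : HasDerivAt (fun u => 1 + lam * δ u) (lam * d) s := (hδ.const_mul lam).const_add 1
  have hc := hL.comp s ((hasDerivAt_const s lam).div hD hden)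
  refine ((hc.add ((hasDerivAt_id s).mul (hD.log hden))).sub
    ((hasDerivAt_id s).mul ((hδ.const_mul lam).div hD hden))).congr_deriv ?_
  simp only [id, Pi.div_apply]
  -- the `d`-terms cancel whatever the value of the denominator
  generalize 1 + lam * δ s = D at hden ⊢
  field_simp
  ring

lemma log_one_add_sub_div_nonneg {x : ℝ} (hx : -1 < x) : 0 ≤ log (1 + x) - x / (1 + x) := by
  have h := one_sub_inv_le_log_of_pos (show 0 < 1 + x by linarith)
  have : 1 - (1 + x)⁻¹ = x / (1 + x) := by field_simp [show 1 + x ≠ 0 by linarith]; ring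
  linarith

/-- **Monotonicity of the sensing mutual information in the number of frames**
(computation (9)–(10) of the paper): with `δ(s)` the fixed-point solution and
`g(s) = ρ̄(λ,T,s,δ(s))`, one has `g'(s) = log(1+λδ(s)) − λδ(s)/(1+λδ(s)) ≥ 0`. -/
theorem rhoBar_monotone_in_frames {NT : ℕ} (T : Matrix (Fin NT) (Fin NT) ℂ)
    (hT : T.PosSemidef) (lam : ℝ) (hlam : 0 < lam)
    (a b : ℝ) (hab : Set.Ioo a b ⊆ Set.Ioi (0 : ℝ))
    (δ : ℝ → ℝ)
    (hdiff : ∀ s ∈ Set.Ioo a b, DifferentiableAt ℝ δ s)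
    (hpos : ∀ s ∈ Set.Ioo a b, 0 ≤ δ s)
    (hfix : ∀ s ∈ Set.Ioo a b,
      ((δ s : ℝ) : ℂ) =
        (s : ℂ)⁻¹ * (T * (1 + ((lam / (1 + lam * δ s) : ℝ) : ℂ) • T)⁻¹).trace) :
    (∀ s ∈ Set.Ioo a b,
      HasDerivAt
        (fun u : ℝ =>
          Real.log ((1 + ((lam / (1 + lam * δ u) : ℝ) : ℂ) • T).det.re)
            + u * Real.log (1 + lam * δ u) - u * (lam * δ u / (1 + lam * δ u)))
        (Real.log (1 + lam * δ s) - lam * δ s / (1 + lam * δ s)) s ∧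
      0 ≤ Real.log (1 + lam * δ s) - lam * δ s / (1 + lam * δ s)) ∧
    MonotoneOn
      (fun u : ℝ =>
        Real.log ((1 + ((lam / (1 + lam * δ u) : ℝ) : ℂ) • T).det.re)
          + u * Real.log (1 + lam * δ u) - u * (lam * δ u / (1 + lam * δ u)))
      (Set.Ioo a b) := by
  have hden (s) (hs : s ∈ Set.Ioo a b) : 0 < 1 + lam * δ s := by
    nlinarith [hpos s hs]
  have hlogdet (s) (hs : s ∈ Set.Ioo a b) :
      HasDerivAt (fun c : ℝ => Real.log ((1 + (c : ℂ) • T).det.re)) (s * δ s)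
        (lam / (1 + lam * δ s)) := by
    have hfac (i) : 1 + lam / (1 + lam * δ s) * hT.isHermitian.eigenvalues i ≠ 0 := by
      have := hT.eigenvalues_nonneg i
      have := hden s hs
      positivity
    have htrace := (eq_inv_mul_iff_mul_eq₀ (Complex.ofReal_ne_zero.2 (hab hs).ne')).1 (hfix s hs)
    have := hT.isHermitian.hasDerivAt_log_re_det_one_add_smul hfac
    rwa [← htrace, ← Complex.ofReal_mul, Complex.ofReal_re] at this
  have hderiv (s) (hs : s ∈ Set.Ioo a b) :=
    hasDerivAt_rhoBar (hdiff s hs).hasDerivAt (hden s hs).ne' (hlogdet s hs)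
  have hnonneg (s) (hs : s ∈ Set.Ioo a b) :=
    log_one_add_sub_div_nonneg (x := lam * δ s) (by linarith [hden s hs])
  refine ⟨fun s hs => ⟨hderiv s hs, hnonneg s hs⟩,
    monotoneOn_of_hasDerivWithinAt_nonneg (convex_Ioo a b)
      (fun s hs => (hderiv s hs).continuousAt.continuousWithinAt)
      (fun s hs => (hderiv s (interior_subset hs)).hasDerivWithinAt)
      (fun s hs => hnonneg s (interior_subset hs))⟩
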